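/- For bipartite Brauer operators ρ(η,β) on C^d ⊗ C^d, the set of local-positive operators equals the set of convex combinations of a state-positive Brauer operator and a channel-positive Brauer operator (decomposability within the Brauer family). -/

import Mathlib

open Matrix Kronecker BigOperators
open scoped ComplexOrder

/-- The swap operator `V = ∑ i j, |ij⟩⟨ji|` on `C^d ⊗ C^d`. -/
noncomputable def swapOp (d : ℕ) : Matrix (Fin d × Fin d) (Fin d × Fin d) ℂ :=
  fun p q => if p.1 = q.2 ∧ p.2 = q.1 then 1 else 0

/-- Partial transpose on the first tensor factor. -/
noncomputable def ptransposeA {d : ℕ} (ρ : Matrix (Fin d × Fin d) (Fin d × Fin d) ℂ) :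
    Matrix (Fin d × Fin d) (Fin d × Fin d) ℂ :=
  fun p q => ρ (q.1, p.2) (p.1, q.2)

/-- The Brauer operator `ρ(η,β) = (1−η−β) I/d² + η V/d + β V^{T_A}/d`. -/
noncomputable def brauer (d : ℕ) (η β : ℝ) : Matrix (Fin d × Fin d) (Fin d × Fin d) ℂ :=
  ((1 - η - β) / (d : ℝ)^2) • (1 : Matrix (Fin d × Fin d) (Fin d × Fin d) ℂ)
    + (η / (d : ℝ)) • swapOp d + (β / (d : ℝ)) • ptransposeA (swapOp d)

/-- Local-positivity (block-positivity) of a bipartite operator. -/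
noncomputable def LocalPositive {d : ℕ} (M : Matrix (Fin d × Fin d) (Fin d × Fin d) ℂ) : Prop :=
  ∀ ψ φ : Fin d → ℂ,
    0 ≤ star (fun p : Fin d × Fin d => ψ p.1 * φ p.2) ⬝ᵥ
          M *ᵥ (fun p : Fin d × Fin d => ψ p.1 * φ p.2)

/-!
On product vectors the quadratic form of `ρ(η,β)` is
`(1-η-β)/d² ‖ψ‖²‖φ‖² + η/d |⟨ψ,φ⟩|² + β/d |ψᵀφ|²`, an affine function of the two overlaps,
and product vectors in the span of two basis vectors realise all four corners of the range
of the overlaps. So local positivity amounts to four linear inequalities, which cut out the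
quadrilateral with vertices `(0,1)`, `(-1/(d-1),0)`, `(1,0)`, `(0,-1/(d-1))` in the
`(η,β)`-plane. The first two vertices are state-positive (multiples of the projectors onto the
maximally entangled vector and onto the antisymmetric subspace), the last two are their partial
transposes. Since `ρ` is affine in `(η,β)`, the state- and channel-positive parameters form
convex sets, and the quadrilateral is the convex join of its two edges lying in them.
Conversely, both kinds of positivity imply local positivity, which is preserved by convex
combinations.
-/

def prodVec {m n R : Type*} [Mul R] (ψ : m → R) (φ : n → R) : m × n → R :=
  fun p => ψ p.1 * φ p.2

section prodVec

variable {m n R : Type*} [CommSemiring R]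

lemma star_prodVec [StarRing R] (ψ : m → R) (φ : n → R) :
    star (prodVec ψ φ) = prodVec (star ψ) (star φ) := by
  ext p
  simp [prodVec]

lemma prodVec_dotProduct_prodVec [Fintype m] [Fintype n] (ψ ψ' : m → R) (φ φ' : n → R) :
    prodVec ψ φ ⬝ᵥ prodVec ψ' φ' = (ψ ⬝ᵥ ψ') * (φ ⬝ᵥ φ') := by
  simp only [dotProduct, prodVec, Fintype.sum_prod_type, Finset.sum_mul_sum]
  exact Finset.sum_congr rfl fun _ _ => Finset.sum_congr rfl fun _ _ => by ring

end prodVec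

section ptransposeA

variable {d : ℕ}

lemma ptransposeA_ptransposeA (M : Matrix (Fin d × Fin d) (Fin d × Fin d) ℂ) :
    ptransposeA (ptransposeA M) = M := rfl

lemma ptransposeA_add (M N : Matrix (Fin d × Fin d) (Fin d × Fin d) ℂ) :
    ptransposeA (M + N) = ptransposeA M + ptransposeA N := rfl

lemma ptransposeA_smul (r : ℝ) (M : Matrix (Fin d × Fin d) (Fin d × Fin d) ℂ) :
    ptransposeA (r • M) = r • ptransposeA M := rfl

lemma ptransposeA_one : ptransposeA (1 : Matrix (Fin d × Fin d) (Fin d × Fin d) ℂ) = 1 := by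
  ext p q
  simp only [ptransposeA, one_apply, Prod.ext_iff]
  exact if_congr (by tauto) rfl rfl

lemma swapOp_mulVec_prodVec (ψ φ : Fin d → ℂ) : swapOp d *ᵥ prodVec ψ φ = prodVec φ ψ := by
  ext p
  simp [mulVec, dotProduct, swapOp, prodVec, Fintype.sum_prod_type, ite_and, mul_comm]

lemma dotProduct_mulVec_ptransposeA (M : Matrix (Fin d × Fin d) (Fin d × Fin d) ℂ)
    (ψ φ : Fin d → ℂ) :
    star (prodVec ψ φ) ⬝ᵥ ptransposeA M *ᵥ prodVec ψ φ
      = star (prodVec (star ψ) φ) ⬝ᵥ M *ᵥ prodVec (star ψ) φ := by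
  simp only [dotProduct, mulVec, Finset.mul_sum, Fintype.sum_prod_type, prodVec,
    ptransposeA, Pi.star_apply, star_mul', star_star]
  rw [Finset.sum_comm]
  refine (Finset.sum_congr rfl fun j _ => Finset.sum_comm).trans ?_
  rw [Finset.sum_comm]
  refine Finset.sum_congr rfl fun _ _ => Finset.sum_congr rfl fun _ _ =>
    Finset.sum_congr rfl fun _ _ => Finset.sum_congr rfl fun _ _ => by ring

end ptransposeA

section brauer

variable {d : ℕ}

lemma brauer_add_smul {t s : ℝ} (hts : t + s = 1) (η₁ β₁ η₂ β₂ : ℝ) :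
    brauer d (t * η₁ + s * η₂) (t * β₁ + s * β₂)
      = t • brauer d η₁ β₁ + s • brauer d η₂ β₂ := by
  obtain rfl : s = 1 - t := by linarith
  simp only [brauer, smul_add, smul_smul]
  module

lemma ptransposeA_brauer (η β : ℝ) : ptransposeA (brauer d η β) = brauer d β η := by
  simp only [brauer, ptransposeA_add, ptransposeA_smul, ptransposeA_one, ptransposeA_ptransposeA]
  rw [sub_right_comm]
  abel

def maxEntVec (d : ℕ) : Fin d × Fin d → ℂ := fun p => if p.1 = p.2 then 1 else 0

lemma ptransposeA_swapOp :
    ptransposeA (swapOp d) = vecMulVec (maxEntVec d) (star (maxEntVec d)) := by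
  ext p q
  simp [ptransposeA, swapOp, maxEntVec, vecMulVec, ite_and, eq_comm]

lemma posSemidef_brauer_zero_one : (brauer d 0 1).PosSemidef := by
  have h : brauer d 0 1 = (1 / d : ℝ) • ptransposeA (swapOp d) := by simp [brauer]
  rw [h, ptransposeA_swapOp]
  exact (posSemidef_vecMulVec_self_star _).smul (by positivity)

lemma swapOp_conjTranspose : (swapOp d)ᴴ = swapOp d := by
  ext p q
  simp [swapOp, and_comm, eq_comm]

lemma swapOp_mul_swapOp : swapOp d * swapOp d = 1 := by
  ext p q
  simp [mul_apply, swapOp, one_apply, Prod.ext_iff, Fintype.sum_prod_type, ite_and, eq_comm]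

lemma posSemidef_one_sub_swapOp : (1 - swapOp d).PosSemidef := by
  have h : (1 - swapOp d)ᴴ * (1 - swapOp d) = (2 : ℝ) • (1 - swapOp d) := by
    simp only [conjTranspose_sub, conjTranspose_one, swapOp_conjTranspose, sub_mul, mul_sub,
      one_mul, mul_one, swapOp_mul_swapOp]
    module
  have h' : 1 - swapOp d = (1 / 2 : ℝ) • ((1 - swapOp d)ᴴ * (1 - swapOp d)) := by
    rw [h, smul_smul]; norm_num
  rw [h']
  exact (posSemidef_conjTranspose_mul_self _).smul (by norm_num)

lemma posSemidef_brauer_neg_inv (hd : 2 ≤ d) : (brauer d (-1 / (d - 1)) 0).PosSemidef := by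
  have hd1 : (0 : ℝ) < d - 1 := by
    have : (2 : ℝ) ≤ d := by exact_mod_cast hd
    linarith
  have h : brauer d (-1 / (d - 1)) 0 = (1 / (d * (d - 1)) : ℝ) • (1 - swapOp d) := by
    have hd0 : (d : ℝ) ≠ 0 := by positivity
    have hI : (1 - -1 / (d - 1) - 0) / (d : ℝ) ^ 2 = 1 / (d * (d - 1)) := by
      field_simp; ring
    have hV : -1 / (d - 1) / (d : ℝ) = -(1 / (d * (d - 1))) := by field_simp
    rw [brauer, hI, hV]
    module
  rw [h]
  exact posSemidef_one_sub_swapOp.smul (by positivity)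

end brauer

section localPositive

variable {d : ℕ}

lemma localPositive_iff (M : Matrix (Fin d × Fin d) (Fin d × Fin d) ℂ) :
    LocalPositive M ↔ ∀ ψ φ : Fin d → ℂ, 0 ≤ star (prodVec ψ φ) ⬝ᵥ M *ᵥ prodVec ψ φ :=
  Iff.rfl

lemma LocalPositive.add {M N : Matrix (Fin d × Fin d) (Fin d × Fin d) ℂ}
    (hM : LocalPositive M) (hN : LocalPositive N) : LocalPositive (M + N) := fun ψ φ => by
  rw [add_mulVec, dotProduct_add]
  exact add_nonneg (hM ψ φ) (hN ψ φ)

lemma LocalPositive.smul {M : Matrix (Fin d × Fin d) (Fin d × Fin d) ℂ}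
    (hM : LocalPositive M) {r : ℝ} (hr : 0 ≤ r) : LocalPositive (r • M) := fun ψ φ => by
  rw [smul_mulVec, dotProduct_smul]
  exact smul_nonneg hr (hM ψ φ)

lemma Matrix.PosSemidef.localPositive {M : Matrix (Fin d × Fin d) (Fin d × Fin d) ℂ}
    (hM : M.PosSemidef) : LocalPositive M := fun _ _ => hM.dotProduct_mulVec_nonneg _

lemma LocalPositive.of_posSemidef_ptransposeA {M : Matrix (Fin d × Fin d) (Fin d × Fin d) ℂ}
    (hM : (ptransposeA M).PosSemidef) : LocalPositive M := by
  rw [localPositive_iff]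
  intro ψ φ
  rw [← ptransposeA_ptransposeA M, dotProduct_mulVec_ptransposeA]
  exact hM.dotProduct_mulVec_nonneg _

lemma dotProduct_mulVec_brauer (η β : ℝ) (ψ φ : Fin d → ℂ) :
    star (prodVec ψ φ) ⬝ᵥ brauer d η β *ᵥ prodVec ψ φ
      = ((1 - η - β) / d ^ 2 : ℝ) • ((star ψ ⬝ᵥ ψ) * (star φ ⬝ᵥ φ))
        + (η / d : ℝ) • ((star ψ ⬝ᵥ φ) * (star φ ⬝ᵥ ψ))
        + (β / d : ℝ) • ((ψ ⬝ᵥ φ) * (star φ ⬝ᵥ star ψ)) := by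
  have hV : ∀ ψ φ : Fin d → ℂ, star (prodVec ψ φ) ⬝ᵥ swapOp d *ᵥ prodVec ψ φ
      = (star ψ ⬝ᵥ φ) * (star φ ⬝ᵥ ψ) := fun ψ φ => by
    rw [swapOp_mulVec_prodVec, star_prodVec, prodVec_dotProduct_prodVec]
  rw [brauer, add_mulVec, add_mulVec, smul_mulVec, smul_mulVec, smul_mulVec, one_mulVec,
    dotProduct_add, dotProduct_add, dotProduct_smul, dotProduct_smul, dotProduct_smul,
    dotProduct_mulVec_ptransposeA, hV, hV, star_star, star_prodVec, prodVec_dotProduct_prodVec]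

end localPositive

section twoLevel

variable {d : ℕ}

def twoLevelVec (i j : Fin d) (z : ℂ) : Fin d → ℂ := Pi.single i 1 + z • Pi.single j 1

lemma star_twoLevelVec (i j : Fin d) (z : ℂ) :
    star (twoLevelVec i j z) = twoLevelVec i j (star z) := by
  simp [twoLevelVec, Pi.star_single]

lemma twoLevelVec_dotProduct {i j : Fin d} (hij : i ≠ j) (z w : ℂ) :
    twoLevelVec i j z ⬝ᵥ twoLevelVec i j w = 1 + z * w := by
  simp [twoLevelVec, dotProduct_add, hij, hij.symm, mul_comm]

open ComplexConjugate in
lemma LocalPositive.brauer_twoLevel {η β : ℝ} (h : LocalPositive (brauer d η β)) {i j : Fin d}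
    (hij : i ≠ j) (z w : ℂ) :
    0 ≤ (1 - η - β) / d ^ 2 * ((1 + Complex.normSq z) * (1 + Complex.normSq w))
      + η / d * Complex.normSq (1 + conj z * w) + β / d * Complex.normSq (1 + z * w) := by
  have hzw := (localPositive_iff _).1 h (twoLevelVec i j z) (twoLevelVec i j w)
  simp only [dotProduct_mulVec_brauer, star_twoLevelVec, twoLevelVec_dotProduct hij,
    Complex.real_smul, Complex.star_def] at hzw
  refine Complex.zero_le_real.1 (hzw.trans_eq ?_)
  push_cast [Complex.normSq_eq_conj_mul_self, map_add, map_mul, map_one, Complex.conj_conj]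
  ring

end twoLevel

lemma LocalPositive.brauer_vertex_conditions {d : ℕ} (hd : 2 ≤ d) {η β : ℝ}
    (h : LocalPositive (brauer d η β)) :
    0 ≤ 1 - η - β ∧ 0 ≤ 1 - η - β + d * η ∧ 0 ≤ 1 - η - β + d * β
      ∧ 0 ≤ 1 - η - β + d * η + d * β := by
  have hij : (⟨0, by omega⟩ : Fin d) ≠ ⟨1, by omega⟩ := by simp
  have hd0 : (d : ℝ) ≠ 0 := by positivity
  -- the pairs `(z, w)` realise the four corners of the overlaps `(|⟨ψ, φ⟩|², |ψᵀφ|²)`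
  have h₁ := h.brauer_twoLevel hij 1 (-1)
  have h₂ := h.brauer_twoLevel hij Complex.I Complex.I
  have h₃ := h.brauer_twoLevel hij Complex.I (-Complex.I)
  have h₄ := h.brauer_twoLevel hij 1 1
  norm_num at h₁ h₂ h₃ h₄
  refine ⟨?_, ?_, ?_, ?_⟩
  · exact nonneg_of_mul_nonneg_left (b := 1 / d ^ 2) (h₁.trans_eq (by ring)) (by positivity)
  · exact nonneg_of_mul_nonneg_left (b := 4 / d ^ 2) (h₂.trans_eq (by field_simp))
      (by positivity)
  · exact nonneg_of_mul_nonneg_left (b := 4 / d ^ 2) (h₃.trans_eq (by field_simp))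
      (by positivity)
  · exact nonneg_of_mul_nonneg_left (b := 4 / d ^ 2) (h₄.trans_eq (by field_simp))
      (by positivity)

lemma mem_convexHull_triple {E : Type*} [AddCommGroup E] [Module ℝ E] {x y z p : E}
    {a b c : ℝ} (ha : 0 ≤ a) (hb : 0 ≤ b) (hc : 0 ≤ c) (habc : a + b + c = 1)
    (hp : a • x + b • y + c • z = p) : p ∈ convexHull ℝ {x, y, z} := by
  have h := (convex_convexHull ℝ ({x, y, z} : Set E)).sum_mem (t := Finset.univ)
    (w := ![a, b, c]) (z := ![x, y, z])
    (fun i _ => by fin_cases i <;> simpa)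
    (by simpa [Fin.sum_univ_three] using habc)
    (fun i _ => subset_convexHull ℝ _ (by fin_cases i <;> simp))
  simpa [Fin.sum_univ_three, hp] using h

lemma mem_convexHull_of_vertex_conditions {D η β : ℝ} (hD : 1 < D) (h₁ : 0 ≤ 1 - η - β)
    (h₂ : 0 ≤ 1 - η - β + D * η) (h₃ : 0 ≤ 1 - η - β + D * β)
    (h₄ : 0 ≤ 1 - η - β + D * η + D * β) :
    (η, β) ∈ convexHull ℝ {((0 : ℝ), (1 : ℝ)), (-1 / (D - 1), 0), (1, 0), (0, -1 / (D - 1))} := by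
  have hD0 : D ≠ 0 := by positivity
  have hD1 : D - 1 ≠ 0 := by linarith
  have hD1' : 0 ≤ D - 1 := by linarith
  -- the diagonal `β = 0` cuts the quadrilateral into two triangles
  rcases le_total 0 β with hβ | hβ
  · refine convexHull_mono (by intro; simp; tauto) (mem_convexHull_triple
      (x := ((0 : ℝ), (1 : ℝ))) (y := (-1 / (D - 1), 0)) (z := (1, 0))
      (a := β) (b := (D - 1) * (1 - η - β) / D)
      (c := (1 - η - β + D * η) / D) hβ ?_ ?_ ?_ ?_)
    · exact div_nonneg (mul_nonneg hD1' h₁) (by linarith)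
    · exact div_nonneg h₂ (by linarith)
    · field_simp; ring
    · ext <;> simp
      field_simp
      ring
  · refine convexHull_mono (by intro; simp; tauto) (mem_convexHull_triple
      (x := (-1 / (D - 1), 0)) (y := ((1 : ℝ), (0 : ℝ))) (z := (0, -1 / (D - 1)))
      (a := (D - 1) * (1 - η - β + D * β) / D) (b := (1 - η - β + D * η + D * β) / D)
      (c := -(D - 1) * β) ?_ ?_ ?_ ?_ ?_)
    · exact div_nonneg (mul_nonneg hD1' h₃) (by linarith)
    · exact div_nonneg h₄ (by linarith)
    · nlinarith
    · field_simp; ring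
    · ext <;> simp
      · field_simp; ring
      · field_simp; ring

section params

variable (d : ℕ)

def statePositiveParams : Set (ℝ × ℝ) := {p | (brauer d p.1 p.2).PosSemidef}

def channelPositiveParams : Set (ℝ × ℝ) := {p | (ptransposeA (brauer d p.1 p.2)).PosSemidef}

lemma convex_statePositiveParams : Convex ℝ (statePositiveParams d) := by
  intro p hp q hq a b ha hb hab
  change (brauer d (a * p.1 + b * q.1) (a * p.2 + b * q.2)).PosSemidef
  rw [brauer_add_smul hab]
  exact (hp.smul ha).add (hq.smul hb)

lemma convex_channelPositiveParams : Convex ℝ (channelPositiveParams d) := by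
  intro p hp q hq a b ha hb hab
  simp only [channelPositiveParams, Set.mem_ofPred_eq, ptransposeA_brauer, Prod.fst_add,
    Prod.snd_add, Prod.smul_fst, Prod.smul_snd, smul_eq_mul] at hp hq ⊢
  rw [brauer_add_smul hab]
  exact (hp.smul ha).add (hq.smul hb)

end params

lemma LocalPositive.mem_convexJoin {d : ℕ} (hd : 2 ≤ d) {η β : ℝ}
    (h : LocalPositive (brauer d η β)) :
    (η, β) ∈ convexJoin ℝ (statePositiveParams d) (channelPositiveParams d) := by
  have hd' : (1 : ℝ) < d := by exact_mod_cast hd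
  obtain ⟨h₁, h₂, h₃, h₄⟩ := h.brauer_vertex_conditions hd
  have hquad := mem_convexHull_of_vertex_conditions hd' h₁ h₂ h₃ h₄
  rw [← convexJoin_segments] at hquad
  refine convexJoin_mono ?_ ?_ hquad
  · exact (convex_statePositiveParams d).segment_subset posSemidef_brauer_zero_one
      (posSemidef_brauer_neg_inv hd)
  · refine (convex_channelPositiveParams d).segment_subset ?_ ?_
    · change (ptransposeA (brauer d 1 0)).PosSemidef
      rw [ptransposeA_brauer]
      exact posSemidef_brauer_zero_one
    · change (ptransposeA (brauer d 0 (-1 / (d - 1)))).PosSemidef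
      rw [ptransposeA_brauer]
      exact posSemidef_brauer_neg_inv hd

/-- Decomposability within the Brauer family: a Brauer operator is local-positive iff
it is a convex combination of a state-positive Brauer operator and a channel-positive
Brauer operator. -/
theorem stmt9 (d : ℕ) (hd : 2 ≤ d) (η β : ℝ) :
    LocalPositive (brauer d η β) ↔
      ∃ (t : ℝ) (η₁ β₁ η₂ β₂ : ℝ), 0 ≤ t ∧ t ≤ 1 ∧
        (brauer d η₁ β₁).PosSemidef ∧
        (ptransposeA (brauer d η₂ β₂)).PosSemidef ∧
        brauer d η β = t • brauer d η₁ β₁ + (1 - t) • brauer d η₂ β₂ := by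
  constructor
  · intro h
    obtain ⟨p, hp, q, hq, t, s, ht, hs, hts, hpq⟩ := mem_convexJoin.1 (h.mem_convexJoin hd)
    obtain rfl : s = 1 - t := by linarith
    refine ⟨t, p.1, p.2, q.1, q.2, ht, by linarith, hp, hq, ?_⟩
    obtain ⟨rfl, rfl⟩ := Prod.ext_iff.1 hpq.symm
    exact brauer_add_smul (add_sub_cancel t 1) _ _ _ _
  · rintro ⟨t, η₁, β₁, η₂, β₂, ht₀, ht₁, hstate, hchannel, hdecomp⟩
    rw [hdecomp]
    exact (hstate.localPositive.smul ht₀).add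
      ((LocalPositive.of_posSemidef_ptransposeA hchannel).smul (sub_nonneg.2 ht₁))
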